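/- arXiv:1912.05718 — 4 statements merged into one kernel-verified Lean document; each statement's English description precedes it below -/
import Mathlib

section
/- For every ζ ∈ ℂ with ζ ≠ 0, one has p(-1/conj(ζ), ζ) · conj(ζ)^N = Σ_{i=0}^N λ_i² ∏_{j≠i} |ζ - γ_j|², and this quantity is a positive real number. In particular the JNR spectral curve does not intersect the anti-diagonal. -/
/-!
For η = -1/conj ζ each factor of the JNR polynomial satisfies
(ζ - γ)(1 + η conj γ) conj ζ = (ζ - γ) conj (ζ - γ) = |ζ - γ|², so multiplying by
conj ζ ^ N (one conj ζ per factor of each N-fold product) turns p(η, ζ) into a sum of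
squared moduli.
Since ζ can equal at most one γ_i, the summand indexed by that i (or any summand, if ζ is no
γ_i) is strictly positive.
-/

open Finset ComplexConjugate

lemma sub_mul_one_sub_conj_div_conj_mul_conj {ζ : ℂ} (hζ : ζ ≠ 0) (γ : ℂ) :
    (ζ - γ) * (1 + -1 / conj ζ * conj γ) * conj ζ = (‖ζ - γ‖ : ℂ) ^ 2 := by
  have hconj : conj ζ ≠ 0 := (map_ne_zero _).mpr hζ
  rw [← Complex.mul_conj', map_sub, mul_assoc]
  congr 1
  field_simp
  ring

lemma Function.Injective.exists_forall_ne_apply_ne {ι α : Type*} [Nonempty ι] {f : ι → α}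
    (hf : Function.Injective f) (a : α) : ∃ i, ∀ j ≠ i, f j ≠ a := by
  by_cases ha : ∃ i, f i = a
  · obtain ⟨i, rfl⟩ := ha
    exact ⟨i, fun j hji h => hji (hf h)⟩
  · exact ⟨Classical.arbitrary ι, fun j _ hj => ha ⟨j, hj⟩⟩

lemma sum_mul_prod_erase_norm_sub_sq_pos {ι E : Type*} [Fintype ι] [DecidableEq ι] [Nonempty ι]
    [NormedAddCommGroup E] {w : ι → ℝ} (hw : ∀ i, 0 < w i) {γ : ι → E}
    (hγ : Function.Injective γ) (ζ : E) :
    0 < ∑ i, w i * ∏ j ∈ univ.erase i, ‖ζ - γ j‖ ^ 2 := by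
  obtain ⟨i, hi⟩ := hγ.exists_forall_ne_apply_ne ζ
  have hprod : 0 < ∏ j ∈ univ.erase i, ‖ζ - γ j‖ ^ 2 := prod_pos fun j hj =>
    pow_pos (norm_pos_iff.mpr (sub_ne_zero.mpr (hi j (ne_of_mem_erase hj)).symm)) 2
  exact sum_pos' (fun j _ => mul_nonneg (hw j).le (prod_nonneg fun _ _ => sq_nonneg _))
    ⟨i, mem_univ i, mul_pos (hw i) hprod⟩

theorem jnr_antidiagonal_positive_general (N : ℕ) (lam : Fin (N+1) → ℝ)
    (hlam : ∀ i, 0 < lam i) (γ : Fin (N+1) → ℂ) (hγ : Function.Injective γ)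
    (p : ℂ → ℂ → ℂ)
    (hp : ∀ η ζ, p η ζ = ∑ i, (lam i : ℂ)^2 *
      ∏ j ∈ Finset.univ.erase i, (ζ - γ j) * (1 + η * (starRingEnd ℂ) (γ j)))
    (ζ : ℂ) (hζ : ζ ≠ 0) :
    p (-1 / (starRingEnd ℂ) ζ) ζ * ((starRingEnd ℂ) ζ)^N =
      ((∑ i, (lam i)^2 * ∏ j ∈ Finset.univ.erase i, ‖ζ - γ j‖^2 : ℝ) : ℂ) ∧
    0 < ∑ i, (lam i)^2 * ∏ j ∈ Finset.univ.erase i, ‖ζ - γ j‖^2 := by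
  refine ⟨?_, sum_mul_prod_erase_norm_sub_sq_pos (fun i => pow_pos (hlam i) 2) hγ ζ⟩
  rw [hp, sum_mul]
  push_cast
  refine sum_congr rfl fun i _ => ?_
  have hcard : #(univ.erase i) = N := by simp
  rw [mul_assoc]
  congr 1
  simp_rw [← sub_mul_one_sub_conj_div_conj_mul_conj hζ]
  rw [← prod_mul_pow_card, hcard]

/-- On the anti-diagonal the JNR polynomial is a positive real: the curve does
not intersect the anti-diagonal. -/
theorem jnr_antidiagonal_positive (N : ℕ) (hN : 1 ≤ N) (lam : Fin (N+1) → ℝ)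
    (hlam : ∀ i, 0 < lam i) (γ : Fin (N+1) → ℂ) (hγ : Function.Injective γ)
    (p : ℂ → ℂ → ℂ)
    (hp : ∀ η ζ, p η ζ = ∑ i, (lam i : ℂ)^2 *
      ∏ j ∈ Finset.univ.erase i, (ζ - γ j) * (1 + η * (starRingEnd ℂ) (γ j)))
    (ζ : ℂ) (hζ : ζ ≠ 0) :
    p (-1 / (starRingEnd ℂ) ζ) ζ * ((starRingEnd ℂ) ζ)^N =
      ((∑ i, (lam i)^2 * ∏ j ∈ Finset.univ.erase i, ‖ζ - γ j‖^2 : ℝ) : ℂ) ∧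
    0 < ∑ i, (lam i)^2 * ∏ j ∈ Finset.univ.erase i, ‖ζ - γ j‖^2 :=
  jnr_antidiagonal_positive_general N lam hlam γ hγ p hp ζ hζ
end

section
/- A real (N,N) curve admitting a grid is a JNR spectral curve: if q(η, ζ) is a polynomial of bidegree (N, N) vanishing at all points (-1/conj(γ_i), γ_j) for i ≠ j, and the quantities λ_i² := conj(γ_i)^N · q(-1/conj(γ_i), γ_i) / ∏_{j≠i} |γ_i - γ_j|² are positive reals, and q agrees with the JNR polynomial p built from these λ_i and γ_i at the diagonal grid points (-1/conj(γ_i), γ_i), then q = p identically. -/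
/-!
The difference `q - p` is, in each variable separately, a polynomial of degree at most `N`.
The JNR polynomial `p` vanishes at the off-diagonal grid points, because there either the
factor `ζ - γ j` or the factor `1 + η * conj (γ i)` of each summand vanishes; so `q - p`
vanishes on the whole grid `{(-1 / conj (γ i), γ j)}`. For fixed `η = -1 / conj (γ i)` it
therefore has `N + 1` roots in `ζ` and is zero; then for every fixed `ζ` it has the `N + 1`
roots `-1 / conj (γ i)` in `η` and is zero.
-/

open Finset Polynomial

section DegreeLEFunctions

variable (R : Type*) [CommRing R]

noncomputable def degreeLEFunctions (n : ℕ) : Submodule R (R → R) :=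
  (degreeLE R n).map (LinearMap.pi fun z => leval z)

variable {R}

theorem mem_degreeLEFunctions_of_eval_eq {n : ℕ} {g : R → R} (P : R[X])
    (hP : P.natDegree ≤ n) (hg : ∀ z, P.eval z = g z) : g ∈ degreeLEFunctions R n :=
  ⟨P, mem_degreeLE.2 (natDegree_le_iff_degree_le.1 hP), funext hg⟩

theorem pow_mem_degreeLEFunctions {k n : ℕ} (hk : k ≤ n) :
    (fun z : R => z ^ k) ∈ degreeLEFunctions R n :=
  mem_degreeLEFunctions_of_eval_eq (X ^ k) (natDegree_X_pow_le k |>.trans hk) (by simp)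

theorem prod_linear_mem_degreeLEFunctions {ι : Type*} (s : Finset ι) (a b : ι → R) :
    (fun z => ∏ j ∈ s, (a j * z + b j)) ∈ degreeLEFunctions R s.card := by
  have hdeg : (∏ j ∈ s, (C (a j) * X + C (b j))).natDegree ≤ s.card :=
    (natDegree_prod_le _ _).trans <| (sum_le_sum fun _ _ => natDegree_linear_le).trans
      (card_eq_sum_ones s).ge
  exact mem_degreeLEFunctions_of_eval_eq _ hdeg fun z => by simp [eval_prod]

theorem sum_sum_mul_pow_mem_degreeLEFunctions_right {m n : ℕ}
    (c : Fin (m + 1) → Fin (n + 1) → R) (x : R) :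
    (fun y => ∑ a, ∑ b, c a b * x ^ (a : ℕ) * y ^ (b : ℕ)) ∈ degreeLEFunctions R n := by
  have hsum : (fun y => ∑ a, ∑ b, c a b * x ^ (a : ℕ) * y ^ (b : ℕ)) =
      ∑ a, ∑ b, (c a b * x ^ (a : ℕ)) • fun y : R => y ^ (b : ℕ) := by
    ext y
    simp
  rw [hsum]
  exact Submodule.sum_mem _ fun a _ => Submodule.sum_mem _ fun b _ =>
    Submodule.smul_mem _ _ (pow_mem_degreeLEFunctions (Nat.lt_succ_iff.1 b.isLt))

theorem sum_sum_mul_pow_mem_degreeLEFunctions_left {m n : ℕ}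
    (c : Fin (m + 1) → Fin (n + 1) → R) (y : R) :
    (fun x => ∑ a, ∑ b, c a b * x ^ (a : ℕ) * y ^ (b : ℕ)) ∈ degreeLEFunctions R m := by
  have hsum : (fun x => ∑ a, ∑ b, c a b * x ^ (a : ℕ) * y ^ (b : ℕ)) =
      ∑ a, ∑ b, (c a b * y ^ (b : ℕ)) • fun x : R => x ^ (a : ℕ) := by
    ext x
    simp [mul_right_comm]
  rw [hsum]
  exact Submodule.sum_mem _ fun a _ => Submodule.sum_mem _ fun b _ =>
    Submodule.smul_mem _ _ (pow_mem_degreeLEFunctions (Nat.lt_succ_iff.1 a.isLt))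

variable [IsDomain R]

theorem eq_zero_of_mem_degreeLEFunctions {n : ℕ} {g : R → R} (hg : g ∈ degreeLEFunctions R n)
    {ι : Type*} [Fintype ι] {u : ι → R} (hu : Function.Injective u) (hn : n < Fintype.card ι)
    (hzero : ∀ i, g (u i) = 0) : g = 0 := by
  obtain ⟨P, hP, rfl⟩ := hg
  have hPdeg : P.natDegree ≤ n := natDegree_le_iff_degree_le.2 (mem_degreeLE.1 hP)
  have hP0 : P = 0 :=
    eq_zero_of_natDegree_lt_card_of_eval_eq_zero P hu hzero (hPdeg.trans_lt hn)
  ext z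
  simp [hP0]

theorem eq_zero_of_eq_zero_on_grid {m n : ℕ} {f : R → R → R}
    (hleft : ∀ y, (fun x => f x y) ∈ degreeLEFunctions R m)
    (hright : ∀ x, f x ∈ degreeLEFunctions R n)
    {ι κ : Type*} [Fintype ι] [Fintype κ] {u : ι → R} {v : κ → R}
    (hu : Function.Injective u) (hv : Function.Injective v)
    (hm : m < Fintype.card ι) (hn : n < Fintype.card κ)
    (hgrid : ∀ i j, f (u i) (v j) = 0) (x y : R) : f x y = 0 := by
  have hrows : ∀ i, f (u i) = 0 := fun i =>
    eq_zero_of_mem_degreeLEFunctions (hright (u i)) hv hn (hgrid i)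
  have hcol : (fun x => f x y) = 0 :=
    eq_zero_of_mem_degreeLEFunctions (hleft y) hu hm fun i => congrFun (hrows i) y
  exact congrFun hcol x

end DegreeLEFunctions

section JNR

variable {ι : Type*} [Fintype ι] [DecidableEq ι]

/-- The weights `w i` stand for the `λ i ^ 2` of the JNR polynomial. -/
def jnr (w γ : ι → ℂ) (η ζ : ℂ) : ℂ :=
  ∑ i, w i * ∏ j ∈ univ.erase i, (ζ - γ j) * (1 + η * starRingEnd ℂ (γ j))

theorem jnr_mem_degreeLEFunctions_right (w γ : ι → ℂ) (η : ℂ) :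
    jnr w γ η ∈ degreeLEFunctions ℂ (Fintype.card ι - 1) := by
  have hsum : jnr w γ η = ∑ i, w i • fun ζ => ∏ j ∈ univ.erase i,
      ((1 + η * starRingEnd ℂ (γ j)) * ζ + -((1 + η * starRingEnd ℂ (γ j)) * γ j)) := by
    ext ζ
    simp only [jnr, Finset.sum_apply, Pi.smul_apply, smul_eq_mul]
    exact sum_congr rfl fun i _ => congrArg _ (prod_congr rfl fun j _ => by ring)
  rw [hsum]
  refine Submodule.sum_mem _ fun i _ => Submodule.smul_mem _ _ ?_
  simpa [card_erase_of_mem] using prod_linear_mem_degreeLEFunctions (univ.erase i) _ _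

theorem jnr_mem_degreeLEFunctions_left (w γ : ι → ℂ) (ζ : ℂ) :
    (fun η => jnr w γ η ζ) ∈ degreeLEFunctions ℂ (Fintype.card ι - 1) := by
  have hsum : (fun η => jnr w γ η ζ) = ∑ i, w i • fun η => ∏ j ∈ univ.erase i,
      ((ζ - γ j) * starRingEnd ℂ (γ j) * η + (ζ - γ j)) := by
    ext η
    simp only [jnr, Finset.sum_apply, Pi.smul_apply, smul_eq_mul]
    exact sum_congr rfl fun i _ => congrArg _ (prod_congr rfl fun j _ => by ring)
  rw [hsum]
  refine Submodule.sum_mem _ fun i _ => Submodule.smul_mem _ _ ?_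
  simpa [card_erase_of_mem] using prod_linear_mem_degreeLEFunctions (univ.erase i) _ _

theorem jnr_eq_zero_of_ne {w γ : ι → ℂ} {i j : ι} (hγi : γ i ≠ 0) (hij : i ≠ j) :
    jnr w γ (-1 / starRingEnd ℂ (γ i)) (γ j) = 0 := by
  have hconj : starRingEnd ℂ (γ i) ≠ 0 := by simpa using hγi
  refine sum_eq_zero fun k _ => mul_eq_zero_of_right _ ?_
  rcases eq_or_ne k i with rfl | hki
  · exact prod_eq_zero (mem_erase.2 ⟨hij.symm, mem_univ j⟩) (by rw [sub_self, zero_mul])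
  · refine prod_eq_zero (mem_erase.2 ⟨hki.symm, mem_univ i⟩) ?_
    rw [div_mul_cancel₀ _ hconj, add_neg_cancel, mul_zero]

end JNR

theorem grid_curve_is_jnr_general (N : ℕ)
    (γ : Fin (N+1) → ℂ) (hγ : Function.Injective γ) (hγ0 : ∀ i, γ i ≠ 0)
    (hα : Function.Injective (fun i => -1 / (starRingEnd ℂ) (γ i)))
    (c : Fin (N+1) → Fin (N+1) → ℂ)
    (q : ℂ → ℂ → ℂ)
    (hq : ∀ η ζ, q η ζ = ∑ a, ∑ b, c a b * η^(a : ℕ) * ζ^(b : ℕ))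
    (hoffdiag : ∀ i j, i ≠ j → q (-1 / (starRingEnd ℂ) (γ i)) (γ j) = 0)
    (lam : Fin (N+1) → ℝ)
    (p : ℂ → ℂ → ℂ)
    (hp : ∀ η ζ, p η ζ = ∑ i, (lam i : ℂ)^2 *
      ∏ j ∈ Finset.univ.erase i, (ζ - γ j) * (1 + η * (starRingEnd ℂ) (γ j)))
    (hdiag : ∀ i, q (-1 / (starRingEnd ℂ) (γ i)) (γ i) =
      p (-1 / (starRingEnd ℂ) (γ i)) (γ i)) :
    ∀ η ζ, q η ζ = p η ζ := by
  have hqfun : q = fun η ζ => ∑ a, ∑ b, c a b * η ^ (a : ℕ) * ζ ^ (b : ℕ) := funext₂ hq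
  have hpfun : p = jnr (fun i => (lam i : ℂ) ^ 2) γ := funext₂ hp
  have hleft : ∀ ζ, (fun η => q η ζ - p η ζ) ∈ degreeLEFunctions ℂ N := fun ζ => by
    rw [hqfun, hpfun]
    exact Submodule.sub_mem _ (sum_sum_mul_pow_mem_degreeLEFunctions_left c ζ)
      (by simpa using jnr_mem_degreeLEFunctions_left (fun i => (lam i : ℂ) ^ 2) γ ζ)
  have hright : ∀ η, (fun ζ => q η ζ - p η ζ) ∈ degreeLEFunctions ℂ N := fun η => by
    rw [hqfun, hpfun]
    exact Submodule.sub_mem _ (sum_sum_mul_pow_mem_degreeLEFunctions_right c η)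
      (by simpa using jnr_mem_degreeLEFunctions_right (fun i => (lam i : ℂ) ^ 2) γ η)
  have hgrid : ∀ i j,
      q (-1 / starRingEnd ℂ (γ i)) (γ j) - p (-1 / starRingEnd ℂ (γ i)) (γ j) = 0 := by
    intro i j
    rcases eq_or_ne i j with rfl | hij
    · exact sub_eq_zero.2 (hdiag i)
    · rw [hoffdiag i j hij, hpfun, jnr_eq_zero_of_ne (hγ0 i) hij, sub_self]
  intro η ζ
  exact sub_eq_zero.1 <| eq_zero_of_eq_zero_on_grid (f := fun η ζ => q η ζ - p η ζ)
    hleft hright hα hγ (by simp) (by simp) hgrid η ζ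

/-- A real `(N,N)` curve admitting a grid is a JNR spectral curve: if a
bidegree-`(N,N)` polynomial `q` vanishes on the off-diagonal grid points, the
induced weights are positive, and `q` agrees with the JNR polynomial built from
those weights at the diagonal grid points, then `q` equals the JNR polynomial. -/
theorem grid_curve_is_jnr (N : ℕ) (hN : 1 ≤ N)
    (γ : Fin (N+1) → ℂ) (hγ : Function.Injective γ) (hγ0 : ∀ i, γ i ≠ 0)
    (hα : Function.Injective (fun i => -1 / (starRingEnd ℂ) (γ i)))
    (c : Fin (N+1) → Fin (N+1) → ℂ)
    (q : ℂ → ℂ → ℂ)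
    (hq : ∀ η ζ, q η ζ = ∑ a, ∑ b, c a b * η^(a : ℕ) * ζ^(b : ℕ))
    (hoffdiag : ∀ i j, i ≠ j → q (-1 / (starRingEnd ℂ) (γ i)) (γ j) = 0)
    (lam : Fin (N+1) → ℝ) (hlam : ∀ i, 0 < lam i)
    (hlamdef : ∀ i, ((lam i : ℂ))^2 =
      ((starRingEnd ℂ) (γ i))^N * q (-1 / (starRingEnd ℂ) (γ i)) (γ i) /
        (∏ j ∈ Finset.univ.erase i, (‖γ i - γ j‖)^2 : ℝ))
    (p : ℂ → ℂ → ℂ)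
    (hp : ∀ η ζ, p η ζ = ∑ i, (lam i : ℂ)^2 *
      ∏ j ∈ Finset.univ.erase i, (ζ - γ j) * (1 + η * (starRingEnd ℂ) (γ j)))
    (hdiag : ∀ i, q (-1 / (starRingEnd ℂ) (γ i)) (γ i) =
      p (-1 / (starRingEnd ℂ) (γ i)) (γ i)) :
    ∀ η ζ, q η ζ = p η ζ :=
  grid_curve_is_jnr_general N γ hγ hγ0 hα c q hq hoffdiag lam p hp hdiag
end

section
/- SO(3) covariance of JNR data: let g = [[a, b], [-conj(b), conj(a)]] with |a|² + |b|² = 1 act on ℂ ∪ {∞} by Möbius transformation g·z = (az + b)/(-conj(b)z + conj(a)). If conj(a) - conj(b)γ_i ≠ 0 for all i, then for all z with -conj(b)z + conj(a) ≠ 0 and z ≠ γ_i: λ_i / (g^{-1}·z - γ_i) = (λ_i / |conj(a) - conj(b)γ_i|) · (conj(b)z + a)/( z - (aγ_i + b)/(conj(a) - conj(b)γ_i)) · u_i, where g^{-1}·z = (conj(a)z - b)/(conj(b)z + a) and u_i = (conj(a) - conj(b)γ_i)/|conj(a) - conj(b)γ_i| is a unit complex number. -/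
open Finset

set_option maxHeartbeats 1000000

/-- SO(3) covariance of the JNR holomorphic sphere coordinate: the pulled-back
coordinate equals, up to the common factor `conj b * z + a` and a unit complex
number `u = conj(conj a - conj b * γ) / |conj a - conj b * γ|`, the sphere
coordinate of the transformed JNR data. -/
theorem jnr_so3_covariance (a b : ℂ) (hab : ‖a‖ ^ 2 + ‖b‖ ^ 2 = 1)
    (γ : ℂ) (hγ : (starRingEnd ℂ) a - (starRingEnd ℂ) b * γ ≠ 0)
    (lam : ℝ) (hlam : 0 < lam)
    (z : ℂ) (hz1 : (starRingEnd ℂ) b * z + a ≠ 0)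
    (hz2 : (starRingEnd ℂ) a * z - b ≠ ((starRingEnd ℂ) b * z + a) * γ) :
    (lam : ℂ) / (((starRingEnd ℂ) a * z - b) / ((starRingEnd ℂ) b * z + a) - γ) =
      ((lam : ℂ) / (‖(starRingEnd ℂ) a - (starRingEnd ℂ) b * γ‖ : ℂ)) *
        (((starRingEnd ℂ) b * z + a) /
          (z - (a * γ + b) / ((starRingEnd ℂ) a - (starRingEnd ℂ) b * γ))) *
        ((starRingEnd ℂ) ((starRingEnd ℂ) a - (starRingEnd ℂ) b * γ) /
          (‖(starRingEnd ℂ) a - (starRingEnd ℂ) b * γ‖ : ℂ)) := by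
  obtain ⟨c, hc⟩ : ∃ c, c = (starRingEnd ℂ) a - (starRingEnd ℂ) b * γ := ⟨_, rfl⟩
  rw [← hc]
  have hγ : c ≠ 0 := hc ▸ hγ
  have hN : (starRingEnd ℂ) a * z - b - ((starRingEnd ℂ) b * z + a) * γ ≠ 0 :=
    sub_ne_zero.mpr hz2
  have habs : (‖c‖ : ℂ) ≠ 0 := by
    simpa using (norm_ne_zero_iff.mpr hγ)
  have hconj : (starRingEnd ℂ) c ≠ 0 := by simpa using hγ
  have hmc : c * (starRingEnd ℂ) c = ((‖c‖ : ℂ)) * (‖c‖ : ℂ) := by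
    rw [Complex.mul_conj]
    norm_cast
    rw [Complex.normSq_eq_norm_sq, sq]
  have key : ((lam : ℂ) / (‖c‖ : ℂ)) * ((starRingEnd ℂ) c / (‖c‖ : ℂ)) =
      (lam : ℂ) / c := by
    rw [div_mul_div_comm, ← hmc]
    exact mul_div_mul_right _ _ hconj
  have e2 : z - (a * γ + b) / c =
      ((starRingEnd ℂ) a * z - b - ((starRingEnd ℂ) b * z + a) * γ) / c := by
    rw [eq_div_iff hγ, sub_mul, div_mul_cancel₀ _ hγ, hc]
    ring
  rw [div_sub' hz1, div_div_eq_mul_div, e2, div_div_eq_mul_div, mul_right_comm, key,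
    div_mul_div_comm, div_eq_div_iff hN (mul_ne_zero hγ hN)]
  ring
end

section
/- The quantities λ_i² λ_j² / |1 + conj(γ_i) γ_j|² are invariant under the SO(3) action on JNR data: if λ_i' = λ_i / |conj(a) - conj(b)γ_i| and γ_i' = (aγ_i + b)/(conj(a) - conj(b)γ_i) with |a|² + |b|² = 1 and conj(a) - conj(b)γ_k ≠ 0 for all k, then λ_i'² λ_j'² / |1 + conj(γ_i') γ_j'|² = λ_i² λ_j² / |1 + conj(γ_i) γ_j|² for all i, j with 1 + conj(γ_i)γ_j ≠ 0. -/
open Finset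

/-- Invariance of `λᵢ²λⱼ²/|1 + conj(γᵢ)γⱼ|²` under the SO(3) action on JNR data. -/
theorem jnr_so3_invariant (N : ℕ) (hN : 1 ≤ N)
    (a b : ℂ) (hab : ‖a‖ ^ 2 + ‖b‖ ^ 2 = 1)
    (lam : Fin (N+1) → ℝ) (hlam : ∀ i, 0 < lam i)
    (γ : Fin (N+1) → ℂ)
    (hd : ∀ k, (starRingEnd ℂ) a - (starRingEnd ℂ) b * γ k ≠ 0)
    (lam' : Fin (N+1) → ℝ) (γ' : Fin (N+1) → ℂ)
    (hlam' : ∀ k, lam' k = lam k / ‖(starRingEnd ℂ) a - (starRingEnd ℂ) b * γ k‖)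
    (hγ' : ∀ k, γ' k = (a * γ k + b) / ((starRingEnd ℂ) a - (starRingEnd ℂ) b * γ k))
    (i j : Fin (N+1)) (hij : 1 + (starRingEnd ℂ) (γ i) * γ j ≠ 0) :
    (lam' i)^2 * (lam' j)^2 / (‖1 + (starRingEnd ℂ) (γ' i) * γ' j‖)^2 =
      (lam i)^2 * (lam j)^2 / (‖1 + (starRingEnd ℂ) (γ i) * γ j‖)^2 := by
  set di := (starRingEnd ℂ) a - (starRingEnd ℂ) b * γ i with hdi
  set dj := (starRingEnd ℂ) a - (starRingEnd ℂ) b * γ j with hdj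
  have hone : a * (starRingEnd ℂ) a + b * (starRingEnd ℂ) b = 1 := by
    have := hab
    rw [Complex.sq_norm, Complex.sq_norm] at this
    have := congrArg (Complex.ofReal) this
    push_cast at this
    rw [← Complex.mul_conj, ← Complex.mul_conj] at this
    simpa using this
  have key : (1 + (starRingEnd ℂ) (γ' i) * γ' j) * ((starRingEnd ℂ) di * dj)
      = 1 + (starRingEnd ℂ) (γ i) * γ j := by
    rw [hγ' i, hγ' j, ← hdi, ← hdj]
    have hdi' : (starRingEnd ℂ) di ≠ 0 := by simpa using (hd i)
    rw [map_div₀, add_mul, one_mul, div_mul_div_comm, div_mul_cancel₀ _ (mul_ne_zero hdi' (hd j)), hdi, hdj]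
    simp only [map_sub, map_mul, map_add, Complex.conj_conj]
    linear_combination (1 + (starRingEnd ℂ) (γ i) * γ j) * hone
  have habs : ‖1 + (starRingEnd ℂ) (γ' i) * γ' j‖
      * (‖di‖ * ‖dj‖) = ‖1 + (starRingEnd ℂ) (γ i) * γ j‖ := by
    rw [← key, norm_mul, norm_mul, Complex.norm_conj]
  have hdiabs : ‖di‖ ≠ 0 := by simpa using hd i
  have hdjabs : ‖dj‖ ≠ 0 := by simpa using hd j
  have habsne : ‖1 + (starRingEnd ℂ) (γ i) * γ j‖ ≠ 0 := by
    simpa using hij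
  have habs'ne : ‖1 + (starRingEnd ℂ) (γ' i) * γ' j‖ ≠ 0 := by
    intro h
    rw [h, zero_mul] at habs
    exact habsne habs.symm
  rw [hlam' i, hlam' j, ← hdi, ← hdj, ← habs]
  field_simp
end
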